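/- With the hypotheses of the previous setting, for λ₁ ∈ P₁Λ, the family {e_ξ : ξ ∈ Λ(λ₁)} is total in L²(Ω₂) if and only if e_{λ₁} is orthogonal in L²(Ω₁) to e_{λ₁'} for every λ₁' ∈ P₁Λ \ {λ₁}. -/

import Mathlib

open MeasureTheory Complex Set

/-- The exponential `e_λ(x) = e^{i2πλ·x}` on `ℝ^d`. -/
noncomputable def expChar {d : ℕ} (l x : Fin d → ℝ) : ℂ :=
  Complex.exp (2 * Real.pi * Complex.I * ((∑ j, l j * x j : ℝ) : ℂ))

/-- `(μ, (e_l)_{l ∈ Λ})` is a spectral family: the exponentials indexed by `Λ` are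
pairwise orthogonal and total in `L²(μ)`. -/
def IsSpectralFamily {α ι : Type*} [MeasurableSpace α] (μ : Measure α)
    (e : ι → α → ℂ) (Λ : Set ι) : Prop :=
  (∀ l ∈ Λ, ∀ l' ∈ Λ, l ≠ l' → ∫ x, (starRingEnd ℂ) (e l x) * e l' x ∂μ = 0) ∧
  ∀ f : α → ℂ, MemLp f 2 μ →
    (∀ l ∈ Λ, ∫ x, (starRingEnd ℂ) (e l x) * f x ∂μ = 0) → f =ᵐ[μ] 0

lemma norm_expChar {d : ℕ} (l x : Fin d → ℝ) : ‖expChar l x‖ = 1 := by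
  have : (2 * (Real.pi : ℂ) * Complex.I * ((∑ j, l j * x j : ℝ) : ℂ))
      = ((2 * Real.pi * (∑ j, l j * x j) : ℝ) : ℂ) * Complex.I := by push_cast; ring
  rw [expChar, this, Complex.norm_exp_ofReal_mul_I]

lemma expChar_ne_zero' {d : ℕ} (l x : Fin d → ℝ) : expChar l x ≠ 0 :=
  Complex.exp_ne_zero _

lemma continuous_expChar {d : ℕ} (l : Fin d → ℝ) : Continuous (expChar l) := by
  unfold expChar
  exact Complex.continuous_exp.comp <| continuous_const.mul <|
    Complex.continuous_ofReal.comp <| continuous_finset_sum _ fun j _ =>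
      continuous_const.mul (continuous_apply j)

lemma memLp_expChar {d : ℕ} (l : Fin d → ℝ) {μ : Measure (Fin d → ℝ)} [IsFiniteMeasure μ] :
    MemLp (expChar l) 2 μ :=
  MemLp.of_bound ((continuous_expChar l).aestronglyMeasurable) 1
    (Filter.Eventually.of_forall fun x => le_of_eq (norm_expChar l x))

/-- If `(Ω₁ × Ω₂, Λ)` is a spectral pair and `λ₁ ∈ P₁Λ`, then the exponentials indexed
by the fiber `Λ(λ₁)` are total in `L²(Ω₂)` iff `e_{λ₁}` is orthogonal in `L²(Ω₁)` to
`e_{λ₁'}` for every `λ₁' ∈ P₁Λ \ {λ₁}`. -/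
theorem stmt10 (d₁ d₂ : ℕ) (Ω₁ : Set (Fin d₁ → ℝ)) (Ω₂ : Set (Fin d₂ → ℝ))
    (hΩ₁ : 0 < volume Ω₁) (hΩ₁' : volume Ω₁ < ⊤)
    (hΩ₂ : 0 < volume Ω₂) (hΩ₂' : volume Ω₂ < ⊤)
    (Λ : Set ((Fin d₁ → ℝ) × (Fin d₂ → ℝ)))
    (h : IsSpectralFamily ((volume.restrict Ω₁).prod (volume.restrict Ω₂))
      (fun l p => expChar l.1 p.1 * expChar l.2 p.2) Λ)
    (l₁ : Fin d₁ → ℝ) (hl₁ : l₁ ∈ Prod.fst '' Λ) :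
    (∀ g : (Fin d₂ → ℝ) → ℂ, MemLp g 2 (volume.restrict Ω₂) →
        (∀ ξ ∈ {l₂ | (l₁, l₂) ∈ Λ},
          ∫ x in Ω₂, (starRingEnd ℂ) (expChar ξ x) * g x = 0) →
        g =ᵐ[volume.restrict Ω₂] 0) ↔
      ∀ l₁' ∈ Prod.fst '' Λ, l₁' ≠ l₁ →
        ∫ x in Ω₁, (starRingEnd ℂ) (expChar l₁ x) * expChar l₁' x = 0 := by
  set μ := volume.restrict Ω₁ with hμ
  set ν := volume.restrict Ω₂ with hν
  haveI : IsFiniteMeasure μ := ⟨by simpa [μ] using hΩ₁'⟩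
  haveI : IsFiniteMeasure ν := ⟨by simpa [ν] using hΩ₂'⟩
  have hνne : ν ≠ 0 := by
    intro h0
    rw [hν] at h0
    have : volume Ω₂ = 0 := by
      simpa using congrArg (fun m : Measure (Fin d₂ → ℝ) => m univ) h0
    exact absurd this (ne_of_gt hΩ₂)
  have hμne : μ ≠ 0 := by
    intro h0
    rw [hμ] at h0
    have : volume Ω₁ = 0 := by
      simpa using congrArg (fun m : Measure (Fin d₁ → ℝ) => m univ) h0
    exact absurd this (ne_of_gt hΩ₁)
  -- the factorization of inner products of product functions
  have hfact : ∀ (a : Fin d₁ → ℝ) (b : Fin d₂ → ℝ) (u : (Fin d₁ → ℝ) → ℂ)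
      (v : (Fin d₂ → ℝ) → ℂ),
      (∫ z, (starRingEnd ℂ) (expChar a z.1 * expChar b z.2) * (u z.1 * v z.2) ∂μ.prod ν)
        = (∫ x, (starRingEnd ℂ) (expChar a x) * u x ∂μ)
          * ∫ y, (starRingEnd ℂ) (expChar b y) * v y ∂ν := by
    intro a b u v
    rw [← integral_prod_mul (fun x => (starRingEnd ℂ) (expChar a x) * u x)
      (fun y => (starRingEnd ℂ) (expChar b y) * v y)]
    congr 1
    funext z
    rw [map_mul]
    ring
  constructor
  · -- totality of fiber ⇒ orthogonality
    rintro htot l₁' ⟨⟨a, b⟩, hab, rfl⟩ hne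
    by_contra hI
    have hb0 : expChar b =ᵐ[ν] 0 := by
      refine htot (expChar b) (memLp_expChar b) fun ξ hξ => ?_
      have horth := h.1 (l₁, ξ) hξ ((a, b).1, b) hab
        (by simp only [ne_eq, Prod.mk.injEq]; exact fun hc => (hne hc.1.symm).elim)
      rw [hfact l₁ ξ (expChar (a, b).1) (expChar b)] at horth
      rcases mul_eq_zero.mp horth with h1 | h2
      · exact absurd h1 hI
      · exact h2
    have : ∃ y, expChar b y = 0 := by
      haveI : (ae ν).NeBot := ae_neBot.2 hνne
      exact hb0.exists
    obtain ⟨y, hy⟩ := this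
    exact expChar_ne_zero' b y hy
  · -- orthogonality ⇒ totality of fiber
    intro horth g hg hgorth
    set f : ((Fin d₁ → ℝ) × (Fin d₂ → ℝ)) → ℂ := fun p => expChar l₁ p.1 * g p.2 with hf
    have hgsnd : MemLp (fun p : (Fin d₁ → ℝ) × (Fin d₂ → ℝ) => g p.2) 2 (μ.prod ν) := by
      have h1 : MemLp g 2 ((μ univ) • ν) :=
        hg.smul_measure (lt_of_le_of_lt (measure_mono (subset_univ _)) (measure_lt_top μ univ)).ne
      have h2 : MemLp g 2 (Measure.map Prod.snd (μ.prod ν)) := by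
        rwa [Measure.map_snd_prod]
      exact ((memLp_map_measure_iff h2.1 measurable_snd.aemeasurable).1 h2 :)
    have hfmem : MemLp f 2 (μ.prod ν) := by
      have hφ : MemLp (fun p : (Fin d₁ → ℝ) × (Fin d₂ → ℝ) => expChar l₁ p.1) ⊤ (μ.prod ν) :=
        memLp_top_of_bound
          (((continuous_expChar l₁).comp continuous_fst).aestronglyMeasurable) 1
          (Filter.Eventually.of_forall fun p => le_of_eq (norm_expChar l₁ p.1))
      exact hgsnd.smul hφ
    have hf0 : f =ᵐ[μ.prod ν] 0 := by
      refine h.2 f hfmem ?_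
      rintro ⟨a, b⟩ hab
      have : (∫ z, (starRingEnd ℂ) (expChar a z.1 * expChar b z.2) * (expChar l₁ z.1 * g z.2)
          ∂μ.prod ν)
          = (∫ x, (starRingEnd ℂ) (expChar a x) * expChar l₁ x ∂μ)
            * ∫ y, (starRingEnd ℂ) (expChar b y) * g y ∂ν := hfact a b _ _
      simp only [hf]
      rw [this]
      by_cases hal : a = l₁
      · subst hal
        rw [hgorth b hab, mul_zero]
      · have hz : ∫ x, (starRingEnd ℂ) (expChar a x) * expChar l₁ x ∂μ = 0 := by
          have h0 : ∫ x, (starRingEnd ℂ) (expChar l₁ x) * expChar a x ∂μ = 0 :=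
            horth a ⟨(a, b), hab, rfl⟩ hal
          have : (fun x => (starRingEnd ℂ) (expChar a x) * expChar l₁ x)
              = fun x => (starRingEnd ℂ) ((starRingEnd ℂ) (expChar l₁ x) * expChar a x) := by
            funext x
            rw [map_mul, Complex.conj_conj]
            ring
          rw [this, integral_conj, h0, map_zero]
        rw [hz, zero_mul]
    have hae : ∀ᵐ x ∂μ, ∀ᵐ y ∂ν, expChar l₁ x * g y = 0 := by
      have := Measure.ae_ae_of_ae_prod hf0
      filter_upwards [this] with x hx
      filter_upwards [hx] with y hy
      simpa [hf] using hy
    haveI : (ae μ).NeBot := ae_neBot.2 hμne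
    obtain ⟨x, hx⟩ := hae.exists
    filter_upwards [hx] with y hy
    have := mul_eq_zero.mp hy
    rcases this with h1 | h2
    · exact absurd h1 (expChar_ne_zero' l₁ x)
    · exact h2
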